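/- arXiv:2511.20125 — 2 statements merged into one kernel-verified Lean document; each statement's English description precedes it below -/
import Mathlib

section
/- Let G = (V, E) be a graph, τ ∈ ℕ, and let (x, y) be a τ-feasible pair for G. Let S = {v ∈ V : x_v > 1/3}. Then |S| ≤ 3 · Σ_{v ∈ V} x_v, and the graph obtained from G by deleting all vertices in S together with their incident edges has maximum degree at most 3τ. -/
open scoped symmDiff

variable {V : Type*}

noncomputable section

/-- Degree of a vertex `v` in `G`. -/
def deg [Fintype V] (G : SimpleGraph V) (v : V) : ℕ :=
  (G.neighborSet v).ncard

/-- Maximum degree of `G`. -/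
def maxDeg [Fintype V] (G : SimpleGraph V) : ℕ :=
  Finset.univ.sup (deg G)

/-- Number of vertices of `G` with degree at least `τ`. -/
def Ntau [Fintype V] (G : SimpleGraph V) (τ : ℕ) : ℕ :=
  {v : V | τ ≤ deg G v}.ncard

/-- Edge distance: the number of edges in the symmetric difference of the edge sets. -/
def edgeDist (G G' : SimpleGraph V) : ℕ :=
  (G.edgeSet ∆ G'.edgeSet).ncard

/-- Lexicographic key of an edge: the unordered pair written with its smaller endpoint first,
compared lexicographically. -/
def edgeKey [LinearOrder V] (e : Sym2 V) : Lex (V × V) :=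
  Sym2.lift ⟨fun a b => toLex (min a b, max a b), fun a b => by simp only []; rw [min_comm, max_comm]⟩ e

/-- `e` is among the `τ` smallest edges (in the fixed lexicographic order) incident to `v`
in `G`. -/
def clipKeep [Fintype V] [LinearOrder V] (G : SimpleGraph V) (τ : ℕ) (v : V)
    (e : Sym2 V) : Prop :=
  {e' ∈ G.incidenceSet v | edgeKey e' ≤ edgeKey e}.ncard ≤ τ

/-- The clipped graph `Clip G τ`: an edge of `G` is retained iff, for each of its two
endpoints `v`, it is among the `τ` smallest edges incident to `v` in `G`. -/
def Clip [Fintype V] [LinearOrder V] (G : SimpleGraph V) (τ : ℕ) : SimpleGraph V where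
  Adj a b := G.Adj a b ∧ clipKeep G τ a s(a, b) ∧ clipKeep G τ b s(a, b)
  symm := by
    constructor
    intro a b h
    refine ⟨h.1.symm, ?_, ?_⟩
    · rw [Sym2.eq_swap]; exact h.2.2
    · rw [Sym2.eq_swap]; exact h.2.1
  loopless := ⟨fun a h => G.loopless.irrefl a h.1⟩

/-- Naive clipping: delete every edge having at least one endpoint of degree `> τ` in `G`. -/
def NaiveClip [Fintype V] (G : SimpleGraph V) (τ : ℕ) : SimpleGraph V where
  Adj a b := G.Adj a b ∧ deg G a ≤ τ ∧ deg G b ≤ τ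
  symm := ⟨fun _ _ h => ⟨h.1.symm, h.2.2, h.2.1⟩⟩
  loopless := ⟨fun a h => G.loopless.irrefl a h.1⟩

/-- The graph obtained from `G` by deleting all vertices in `S` together with their
incident edges. -/
def deleteVerts (G : SimpleGraph V) (S : Set V) : SimpleGraph V where
  Adj a b := G.Adj a b ∧ a ∉ S ∧ b ∉ S
  symm := ⟨fun _ _ h => ⟨h.1.symm, h.2.2, h.2.1⟩⟩
  loopless := ⟨fun a h => G.loopless.irrefl a h.1⟩

/-- `DelN G τ`: the minimum cardinality of a vertex set whose deletion bounds the maximum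
degree of `G` by `τ`. (The paper's `Q_Del-N(G, τ)` equals `-DelN G τ`.) -/
def DelN [Fintype V] (G : SimpleGraph V) (τ : ℕ) : ℕ :=
  sInf {n | ∃ S : Set V, S.ncard = n ∧ maxDeg (deleteVerts G S) ≤ τ}

/-- Total excess of vertex degrees over `τ`. (The paper's `Q_Del-Deg(G, τ)` equals
`-fExcess G τ / 2`.) -/
def fExcess [Fintype V] (G : SimpleGraph V) (τ : ℕ) : ℕ :=
  ∑ v, (deg G v - τ)

/-- A `τ`-feasible pair `(x, y)` for the LP relaxation of node deletion. -/
structure IsFeasible [Fintype V] (G : SimpleGraph V) (τ : ℕ) (x : V → ℝ)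
    (y : Sym2 V → ℝ) : Prop where
  x_mem : ∀ v, x v ∈ Set.Icc (0 : ℝ) 1
  y_mem : ∀ e ∈ G.edgeSet, y e ∈ Set.Icc (0 : ℝ) 1
  edge_cons : ∀ a b, G.Adj a b → 1 - x a - x b ≤ y s(a, b)
  deg_cons : ∀ v, ∑ᶠ e ∈ G.incidenceSet v, y e ≤ (τ : ℝ)

/-- The LP value: infimum of `Σ_v x_v` over all `τ`-feasible pairs.
(The paper's `Q_LP-Del-N(G, τ)` equals `-LPDelN G τ`.) -/
def LPDelN [Fintype V] (G : SimpleGraph V) (τ : ℕ) : ℝ :=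
  sInf {t : ℝ | ∃ x y, IsFeasible G τ x y ∧ t = ∑ v, x v}

/-! Markov's inequality gives `|S| ≤ 3 Σ x`. An edge surviving the deletion of `S` has both
endpoints with `x ≤ 1/3`, so the edge constraint forces `y_e ≥ 1/3`; the degree constraint at a
vertex then leaves room for at most `3τ` such edges. -/

theorem deg_eq_degree [Fintype V] (G : SimpleGraph V) [DecidableRel G.Adj] (v : V) :
    deg G v = G.degree v := by
  rw [deg, ← Nat.card_coe_set_eq, Nat.card_eq_fintype_card, G.card_neighborSet_eq_degree]

theorem deleteVerts_le (G : SimpleGraph V) (S : Set V) : deleteVerts G S ≤ G :=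
  fun _ _ h => h.1

theorem mul_ncard_setOf_lt_le_sum [Fintype V] {x : V → ℝ} (hx : ∀ v, 0 ≤ x v) (c : ℝ) :
    c * {v | c < x v}.ncard ≤ ∑ v, x v := by
  classical
  rw [Set.ncard_eq_toFinset_card', Set.toFinset_ofPred, mul_comm, ← nsmul_eq_mul]
  calc _ ≤ ∑ v ∈ Finset.univ.filter (fun v => c < x v), x v :=
        Finset.card_nsmul_le_sum _ _ _ fun v hv => (Finset.mem_filter.1 hv).2.le
    _ ≤ ∑ v, x v := Finset.sum_le_sum_of_subset_of_nonneg (Finset.filter_subset _ _)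
        fun v _ _ => hx v

theorem deg_mul_le_finsum_incidenceSet [Fintype V] {G H : SimpleGraph V} (hHG : H ≤ G)
    {y : Sym2 V → ℝ} {c : ℝ} (hy : ∀ e ∈ G.edgeSet, 0 ≤ y e) (hc : ∀ e ∈ H.edgeSet, c ≤ y e)
    (v : V) : deg H v * c ≤ ∑ᶠ e ∈ G.incidenceSet v, y e := by
  classical
  rw [← G.coe_incidenceFinset, finsum_mem_coe_finset, deg_eq_degree,
    ← H.card_incidenceFinset_eq_degree, ← nsmul_eq_mul]
  calc _ ≤ ∑ e ∈ H.incidenceFinset v, y e :=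
        Finset.card_nsmul_le_sum _ _ _ fun e he => hc e ((H.mem_incidenceFinset v e).1 he).1
    _ ≤ ∑ e ∈ G.incidenceFinset v, y e := by
        refine Finset.sum_le_sum_of_subset_of_nonneg (fun e he => ?_) fun e he _ => ?_
        · simp only [SimpleGraph.mem_incidenceFinset] at he ⊢
          exact ⟨SimpleGraph.edgeSet_mono hHG he.1, he.2⟩
        · exact hy e ((G.mem_incidenceFinset v e).1 he).1

namespace IsFeasible

variable [Fintype V] {G : SimpleGraph V} {τ : ℕ} {x : V → ℝ} {y : Sym2 V → ℝ}

theorem one_sub_two_mul_le_deleteVerts (hf : IsFeasible G τ x y) (c : ℝ) :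
    ∀ e ∈ (deleteVerts G {v | c < x v}).edgeSet, 1 - 2 * c ≤ y e := by
  rintro ⟨a, b⟩ ⟨hab, ha, hb⟩
  simp only [Set.mem_ofPred_eq, not_lt] at ha hb
  linarith [hf.edge_cons a b hab]

theorem deg_deleteVerts_mul_le (hf : IsFeasible G τ x y) (c : ℝ) (v : V) :
    deg (deleteVerts G {v | c < x v}) v * (1 - 2 * c) ≤ τ :=
  (deg_mul_le_finsum_incidenceSet (deleteVerts_le G _) (fun e he => (hf.y_mem e he).1)
    (hf.one_sub_two_mul_le_deleteVerts c) v).trans (hf.deg_cons v)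

end IsFeasible

/-- For a `τ`-feasible pair `(x, y)` and `S = {v | x_v > 1/3}`, one has
`|S| ≤ 3 Σ_v x_v`, and deleting `S` from `G` yields a graph of maximum degree at most
`3τ`. -/
theorem lp_rounding [Fintype V] (G : SimpleGraph V) (τ : ℕ)
    (x : V → ℝ) (y : Sym2 V → ℝ) (hf : IsFeasible G τ x y) :
    (({v : V | (1 : ℝ) / 3 < x v}).ncard : ℝ) ≤ 3 * ∑ v, x v ∧
      maxDeg (deleteVerts G {v : V | (1 : ℝ) / 3 < x v}) ≤ 3 * τ := by
  refine ⟨?_, Finset.sup_le fun v _ => ?_⟩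
  · linarith [mul_ncard_setOf_lt_le_sum (fun v => (hf.x_mem v).1) (1 / 3)]
  · have hdeg := hf.deg_deleteVerts_mul_le (1 / 3) v
    exact_mod_cast (by linarith : (deg (deleteVerts G {v | 1 / 3 < x v}) v : ℝ) ≤ 3 * τ)

end
end

section
/- For every graph G on V and every τ ∈ ℕ, DelN(G, 3τ) ≤ 3 · LPDelN(G, τ). (Equivalently, in the paper's notation, |Q_Del-N(G, 3τ)| ≤ 3 · |Q_LP-Del-N(G, τ)|.) -/
open scoped symmDiff

variable {V : Type*}

noncomputable section

/-! Round a feasible fractional solution `(x, y)` at `1/3`: delete every vertex with `x v ≥ 1/3`, which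
costs at most `3 · Σ x`. An edge between two surviving vertices has `y e ≥ 1 - x u - x v > 1/3`,
and the `y`-values around a vertex sum to at most `τ`, so each survivor keeps at most `3τ` edges. -/

theorem Set.ncard_sep_nsmul_le_finsum {ι M : Type*} [AddCommMonoid M] [PartialOrder M]
    [IsOrderedAddMonoid M] {s : Set ι} (hs : s.Finite) (f : ι → M) (c : M)
    (hf : ∀ i ∈ s, 0 ≤ f i) : {i ∈ s | c ≤ f i}.ncard • c ≤ ∑ᶠ i ∈ s, f i := by
  classical
  lift s to Finset ι using hs
  have hsep : {i ∈ (s : Set ι) | c ≤ f i} = ↑(s.filter (c ≤ f ·)) := by ext; simp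
  rw [finsum_mem_coe_finset, hsep, Set.ncard_coe_finset]
  calc (s.filter (c ≤ f ·)).card • c ≤ ∑ i ∈ s.filter (c ≤ f ·), f i :=
        Finset.card_nsmul_le_sum _ _ _ fun _ hi => (Finset.mem_filter.1 hi).2
    _ ≤ ∑ i ∈ s, f i :=
        Finset.sum_le_sum_of_subset_of_nonneg (Finset.filter_subset _ _) fun i hi _ => hf i hi

section Graph

variable [Fintype V] {G H : SimpleGraph V}

theorem maxDeg_le_iff {k : ℕ} : maxDeg G ≤ k ↔ ∀ v, deg G v ≤ k := by
  simp [maxDeg]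

theorem deg_le_ncard_incidenceSet_sep {v : V} {P : Sym2 V → Prop}
    (h : ∀ u, H.Adj v u → G.Adj v u ∧ P s(v, u)) :
    deg H v ≤ {e ∈ G.incidenceSet v | P e}.ncard :=
  Set.ncard_le_ncard_of_injOn (fun u => s(v, u))
    (fun u hu => ⟨G.mk'_mem_incidenceSet_left_iff.2 (h u hu).1, (h u hu).2⟩)
    (fun _ _ _ _ huw => Sym2.congr_right.1 huw) (Set.toFinite _)

theorem delN_le_ncard {S : Set V} {τ : ℕ} (h : maxDeg (deleteVerts G S) ≤ τ) :
    DelN G τ ≤ S.ncard :=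
  Nat.sInf_le ⟨S, rfl, h⟩

end Graph

namespace IsFeasible

variable [Fintype V] {G : SimpleGraph V} {τ : ℕ} {x : V → ℝ} {y : Sym2 V → ℝ}

theorem one_zero (G : SimpleGraph V) (τ : ℕ) : IsFeasible G τ 1 0 where
  x_mem _ := ⟨zero_le_one, le_rfl⟩
  y_mem _ _ := ⟨le_rfl, zero_le_one⟩
  edge_cons _ _ _ := by simp
  deg_cons _ := by simp

theorem ncard_le_three_mul_sum (h : IsFeasible G τ x y) :
    ({v | 1 / 3 ≤ x v}.ncard : ℝ) ≤ 3 * ∑ v, x v := by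
  have := Set.ncard_sep_nsmul_le_finsum Set.finite_univ x (1 / 3) fun v _ => (h.x_mem v).1
  simp only [Set.mem_univ, true_and, finsum_true, finsum_eq_sum_of_fintype,
    nsmul_eq_mul] at this
  linarith

theorem ncard_heavy_incidenceSet_le (h : IsFeasible G τ x y) (v : V) :
    {e ∈ G.incidenceSet v | 1 / 3 ≤ y e}.ncard ≤ 3 * τ := by
  have := Set.ncard_sep_nsmul_le_finsum (Set.toFinite (G.incidenceSet v)) y (1 / 3)
    fun e he => (h.y_mem e (G.incidenceSet_subset v he)).1
  rw [nsmul_eq_mul] at this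
  exact_mod_cast (by linarith [h.deg_cons v] :
    ({e ∈ G.incidenceSet v | 1 / 3 ≤ y e}.ncard : ℝ) ≤ 3 * τ)

theorem maxDeg_deleteVerts_le (h : IsFeasible G τ x y) :
    maxDeg (deleteVerts G {v | 1 / 3 ≤ x v}) ≤ 3 * τ := by
  refine maxDeg_le_iff.2 fun v => (deg_le_ncard_incidenceSet_sep ?_).trans
    (h.ncard_heavy_incidenceSet_le v)
  rintro u ⟨huv, hv, hu⟩
  have hv : x v < 1 / 3 := not_le.1 hv
  have hu : x u < 1 / 3 := not_le.1 hu
  exact ⟨huv, by linarith [h.edge_cons v u huv]⟩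

end IsFeasible

theorem le_lpDelN [Fintype V] {G : SimpleGraph V} {τ : ℕ} {a : ℝ}
    (h : ∀ x y, IsFeasible G τ x y → a ≤ ∑ v, x v) : a ≤ LPDelN G τ :=
  le_csInf ⟨_, 1, 0, IsFeasible.one_zero G τ, rfl⟩ fun _ ⟨x, y, hxy, ht⟩ => ht ▸ h x y hxy

/-- `DelN(G, 3τ) ≤ 3 · LPDelN(G, τ)`; equivalently, in the paper's
notation, `|Q_Del-N(G, 3τ)| ≤ 3 · |Q_LP-Del-N(G, τ)|`. -/
theorem delN_le_three_mul_lpDelN [Fintype V] (G : SimpleGraph V) (τ : ℕ) :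
    (DelN G (3 * τ) : ℝ) ≤ 3 * LPDelN G τ := by
  have hround (x y) (h : IsFeasible G τ x y) : (DelN G (3 * τ) : ℝ) / 3 ≤ ∑ v, x v := by
    have := (Nat.cast_le.2 (delN_le_ncard h.maxDeg_deleteVerts_le)).trans h.ncard_le_three_mul_sum
    linarith
  linarith [le_lpDelN hround]

end
end
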